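/- Let μ ≥ 0, α₂ > μ/2, α₃ > 0, τ₂, τ₃ > 0, τ = max{τ₂, τ₃}, λ > 0, q ∈ (0,1], R_q > 0, ω > 0, ε̄ ≥ 0, δ ≥ 0, and set ε(δ) = 2 min{δ/λ, ω} and ζ = τ λ^{−q} R_q. Let L, Q : ℝ^{d₁×d₂} → ℝ be differentiable with, for all Θ, Θ′: α₂‖Θ−Θ′‖_F² − τ₂‖Θ−Θ′‖_*² ≤ T_L(Θ,Θ′) ≤ α₃‖Θ−Θ′‖_F² + τ₃‖Θ−Θ′‖_*², and Q(Θ′) + ⟨⟨∇Q(Θ′), Θ−Θ′⟩⟩ − (μ/2)‖Θ−Θ′‖_F² ≤ Q(Θ) ≤ Q(Θ′) + ⟨⟨∇Q(Θ′), Θ−Θ′⟩⟩. Set Ψ = L + Q + λ‖·‖_* and Ω = {Θ : ‖Θ‖_* ≤ ω}. Let Θ̂ ∈ Ω be a global minimizer of Ψ over Ω for which there exists G with ‖Θ‖_* ≥ ‖Θ̂‖_* + ⟨⟨G, Θ−Θ̂⟩⟩ for all Θ and ⟨⟨∇L(Θ̂)+∇Q(Θ̂)+λG, Θ−Θ̂⟩⟩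 ≥ 0 for all Θ ∈ Ω. Let v ≥ 2α₃ with v ≥ (2α₂−μ)/4, and let (Θᵗ) ⊆ Ω satisfy, for each t, that Θ^{t+1} minimizes over Ω the map Θ ↦ ⟨⟨∇L(Θᵗ)+∇Q(Θᵗ), Θ−Θᵗ⟩⟩ + (v/2)‖Θ−Θᵗ‖_F² + λ‖Θ‖_*. Assume λ^q ≥ 256τR_q/(2α₂−μ), 512ζ < 2α₂−μ, and κ ∈ (0,1), where κ = [1 − (2α₂−μ)/(8v) + 512ζ/(2α₂−μ)] / [1 − 512ζ/(2α₂−μ)] and ξ = 2τ[(2α₂−μ)/(8v) + 1024ζ/(2α₂−μ) + 5] / [1 − 512ζ/(2α₂−μ)]. Finally suppose there is an integer T such that for all t ≥ T: Ψ(Θᵗ) − Ψ(Θ̂) ≤ δ and ‖Θᵗ − Θ̂‖_* ≤ 4√2 λ^{−q/2} R_q^{1/2} ‖Θᵗ − Θ̂‖_F + ε̄ + ε(δ). Then for all t ≥ T: Ψ(Θᵗ) − Ψ(Θ̂) ≤ κ^{t−T}(Ψ(Θ^T) − Ψ(Θ̂)) + (2ξ/(1−κ))(ε̄² + ε(δ)²).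 -/

import Mathlib

open Matrix Finset

attribute [local instance] Matrix.frobeniusNormedAddCommGroup Matrix.frobeniusNormedSpace

noncomputable section

variable {d₁ d₂ : ℕ}

/-- Trace inner product `⟨⟨A,B⟩⟩ = trace(AᵀB)`. -/
def tinner (A B : Matrix (Fin d₁) (Fin d₂) ℝ) : ℝ := (Aᵀ * B).trace

/-- Frobenius norm. -/
def frobNorm (A : Matrix (Fin d₁) (Fin d₂) ℝ) : ℝ := Real.sqrt (∑ i, ∑ j, (A i j) ^ 2)

/-- The (unordered, zero-padded) singular values of `A`: the square roots of the
eigenvalues of `AᵀA`. -/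
def svals (A : Matrix (Fin d₁) (Fin d₂) ℝ) : Fin d₂ → ℝ :=
  fun j => Real.sqrt ((Matrix.isHermitian_conjTranspose_mul_self A).eigenvalues j)

/-- Nuclear norm: sum of singular values. -/
def nuclearNorm (A : Matrix (Fin d₁) (Fin d₂) ℝ) : ℝ := ∑ j, svals A j

/-- Operator norm: largest singular value. -/
def opNorm (A : Matrix (Fin d₁) (Fin d₂) ℝ) : ℝ := ⨆ j, svals A j

/-- The `d₁ × d₂` "diagonal" matrix whose diagonal entries are given by `s`. -/
def svdDiag (s : Fin (min d₁ d₂) → ℝ) : Matrix (Fin d₁) (Fin d₂) ℝ :=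
  Matrix.of fun i j =>
    if h : (i : ℕ) = (j : ℕ) then
      s ⟨(i : ℕ), by have := i.isLt; have := j.isLt; omega⟩ else 0

/-- `s` is the nonincreasing sequence of singular values of `A`, witnessed by a
singular value decomposition `A = U D Vᵀ` with `U, V` orthogonal. -/
def IsSVDOf (A : Matrix (Fin d₁) (Fin d₂) ℝ) (s : Fin (min d₁ d₂) → ℝ) : Prop :=
  Antitone s ∧ (∀ j, 0 ≤ s j) ∧
    ∃ (U : Matrix (Fin d₁) (Fin d₁) ℝ) (V : Matrix (Fin d₂) (Fin d₂) ℝ),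
      Uᵀ * U = 1 ∧ U * Uᵀ = 1 ∧ Vᵀ * V = 1 ∧ V * Vᵀ = 1 ∧ A = U * svdDiag s * Vᵀ

/-- Assumption 1 of the paper on the univariate regularizer `p = p_λ`,
with concave part `q_λ t = p t - λ * |t|`. -/
structure Assumption1 (p : ℝ → ℝ) (lam μ : ℝ) : Prop where
  zero : p 0 = 0
  even : ∀ t : ℝ, p (-t) = p t
  slope_anti : AntitoneOn (fun t => p t / t) (Set.Ioi (0 : ℝ))
  diffable : ∀ t : ℝ, t ≠ 0 → DifferentiableAt ℝ p t
  deriv_tendsto : Filter.Tendsto (deriv p) (nhdsWithin 0 (Set.Ioi 0)) (nhds lam)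
  mono : MonotoneOn p (Set.Ici (0 : ℝ))
  concave : ConcaveOn ℝ (Set.Ici (0 : ℝ)) p
  weakconv : ∀ t t' : ℝ, 0 < t' → t' < t →
    deriv (fun u => p u - lam * |u|) t - deriv (fun u => p u - lam * |u|) t' ≥ -μ * (t - t')

/-- The spectral regularizer `P_λ(Θ) = ∑ⱼ p_λ(σⱼ(Θ))`. -/
def Pl (p : ℝ → ℝ) (A : Matrix (Fin d₁) (Fin d₂) ℝ) : ℝ := ∑ j, p (svals A j)

end

/-
Let `E t = Ψ(Θᵗ) - Ψ(Θ̂)`. Comparing the proximal step with the feasible point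
`Θᵗ + a (Θ̂ - Θᵗ)`, `a = (2α₂ - μ)/(8v)`, and using restricted smoothness of `L`, concavity
of `Q` and convexity of the nuclear norm gives `E (t+1) ≤ (1 - a) E t` plus nuclear-norm error
terms. The cone condition turns these into Frobenius terms plus `ε̄² + ε(δ)²`, and restricted
strong convexity at the stationary point `Θ̂` bounds Frobenius terms by `E`. Solving for
`E (t+1)` gives `E (t+1) ≤ κ E t + 2ξ (ε̄² + ε(δ)²)`, which iterates to the claim.
-/

section MatrixNorms

variable {d₁ d₂ : ℕ}

lemma frobNorm_eq_norm (A : Matrix (Fin d₁) (Fin d₂) ℝ) : frobNorm A = ‖A‖ := by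
  rw [frobNorm, Matrix.frobenius_norm_def, Real.sqrt_eq_rpow]
  simp [Real.norm_eq_abs, sq_abs]

lemma nuclearNorm_neg (A : Matrix (Fin d₁) (Fin d₂) ℝ) : nuclearNorm (-A) = nuclearNorm A := by
  have eigenvalues_congr : ∀ {M N : Matrix (Fin d₂) (Fin d₂) ℝ} (hM : M.IsHermitian)
      (hN : N.IsHermitian), M = N → hM.eigenvalues = hN.eigenvalues := by
    rintro _ _ _ _ rfl; rfl
  simp only [nuclearNorm, svals, eigenvalues_congr (isHermitian_conjTranspose_mul_self (-A))
    (isHermitian_conjTranspose_mul_self A) (by simp)]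

lemma tinner_add_left (A B C : Matrix (Fin d₁) (Fin d₂) ℝ) :
    tinner (A + B) C = tinner A C + tinner B C := by
  simp [tinner, Matrix.add_mul]

lemma tinner_add_right (A B C : Matrix (Fin d₁) (Fin d₂) ℝ) :
    tinner A (B + C) = tinner A B + tinner A C := by
  simp [tinner, Matrix.mul_add]

lemma tinner_smul_left (c : ℝ) (A B : Matrix (Fin d₁) (Fin d₂) ℝ) :
    tinner (c • A) B = c * tinner A B := by
  simp [tinner]

lemma tinner_smul_right (c : ℝ) (A B : Matrix (Fin d₁) (Fin d₂) ℝ) :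
    tinner A (c • B) = c * tinner A B := by
  simp [tinner]

lemma conj_mul_conj {n : Type*} [Fintype n] [DecidableEq n] {V D E : Matrix n n ℝ}
    (hV : Vᵀ * V = 1) :
    V * D * Vᵀ * (V * E * Vᵀ) = V * (D * E) * Vᵀ := by
  simp only [Matrix.mul_assoc]
  rw [← Matrix.mul_assoc Vᵀ V, hV, Matrix.one_mul]

lemma exists_orthogonal_gram_eq_diagonal (A : Matrix (Fin d₁) (Fin d₂) ℝ) :
    ∃ (V : Matrix (Fin d₂) (Fin d₂) ℝ) (e : Fin d₂ → ℝ),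
      Vᵀ * V = 1 ∧ V * Vᵀ = 1 ∧ Aᵀ * A = V * diagonal e * Vᵀ ∧
      (∀ j, 0 ≤ e j) ∧ nuclearNorm A = ∑ j, √(e j) := by
  have hH := isHermitian_conjTranspose_mul_self A
  set V : Matrix (Fin d₂) (Fin d₂) ℝ := (hH.eigenvectorUnitary : Matrix (Fin d₂) (Fin d₂) ℝ)
    with hV
  have hU := hH.eigenvectorUnitary.2
  refine ⟨V, hH.eigenvalues, ?_, ?_, ?_,
    (posSemidef_conjTranspose_mul_self A).eigenvalues_nonneg, rfl⟩
  · simpa [star_eq_conjTranspose, hV] using (mem_unitaryGroup_iff').mp hU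
  · simpa [star_eq_conjTranspose, hV] using (mem_unitaryGroup_iff).mp hU
  · simpa [star_eq_conjTranspose, Function.comp_def, hV] using hH.spectral_theorem

lemma sum_sq_col_eq_gram {m n : Type*} [Fintype m] (M : Matrix m n ℝ) (j : n) :
    ∑ i, M i j ^ 2 = (Mᵀ * M) j j := by
  simp [Matrix.mul_apply, sq]

/- `(1 - Bᵀ * B).PosSemidef` says that `B` lies in the unit ball of the operator norm; the two
lemmas below express the nuclear norm as the support function of that ball, from which its
convexity follows. -/
lemma tinner_le_nuclearNorm {B : Matrix (Fin d₁) (Fin d₂) ℝ} (hB : (1 - Bᵀ * B).PosSemidef)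
    (A : Matrix (Fin d₁) (Fin d₂) ℝ) : tinner B A ≤ nuclearNorm A := by
  obtain ⟨V, e, hVV, hVV', hgram, -, hnn⟩ := exists_orthogonal_gram_eq_diagonal A
  have hA : (A * V)ᵀ * (A * V) = diagonal e := by
    rw [transpose_mul, Matrix.mul_assoc, ← Matrix.mul_assoc Aᵀ, hgram]
    simp only [Matrix.mul_assoc]
    rw [← Matrix.mul_assoc Vᵀ V, hVV, Matrix.one_mul, Matrix.mul_one]
  have hBV : ∀ j, ((B * V)ᵀ * (B * V)) j j ≤ 1 := fun j => by
    have := (hB.conjTranspose_mul_mul_same V).diag_nonneg (i := j)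
    simpa [Matrix.sub_mul, Matrix.mul_sub, hVV, Matrix.mul_assoc, sub_nonneg] using this
  calc tinner B A = ((B * V)ᵀ * (A * V)).trace := by
        rw [transpose_mul, Matrix.mul_assoc, trace_mul_comm, Matrix.mul_assoc, Matrix.mul_assoc,
          hVV', Matrix.mul_one, tinner]
    _ = ∑ j, ∑ i, (B * V) i j * (A * V) i j := by simp [trace, Matrix.mul_apply, mul_comm]
    _ ≤ ∑ j, √(∑ i, (B * V) i j ^ 2) * √(∑ i, (A * V) i j ^ 2) :=
        sum_le_sum fun j _ => Real.sum_mul_le_sqrt_mul_sqrt _ _ _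
    _ ≤ ∑ j, √(e j) := by
        gcongr with j
        rw [sum_sq_col_eq_gram, sum_sq_col_eq_gram, hA, diagonal_apply_eq]
        exact mul_le_of_le_one_left (Real.sqrt_nonneg _) (Real.sqrt_le_one.mpr (hBV j))
    _ = nuclearNorm A := hnn.symm

lemma exists_tinner_eq_nuclearNorm (A : Matrix (Fin d₁) (Fin d₂) ℝ) :
    ∃ B : Matrix (Fin d₁) (Fin d₂) ℝ, (1 - Bᵀ * B).PosSemidef ∧ tinner B A = nuclearNorm A := by
  obtain ⟨V, e, hVV, hVV', hgram, he, hnn⟩ := exists_orthogonal_gram_eq_diagonal A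
  set g : Fin d₂ → ℝ := fun j => (√(e j))⁻¹
  have hge : ∀ j, g j * e j = √(e j) := fun j => by
    rw [inv_mul_eq_div, Real.div_sqrt]
  set M := V * diagonal g * Vᵀ
  have hM : Mᵀ = M := by simp [M, Matrix.mul_assoc]
  refine ⟨A * M, ?_, ?_⟩
  · have hgram' : (A * M)ᵀ * (A * M) = V * diagonal (fun j => g j * (e j * g j)) * Vᵀ := by
      rw [transpose_mul, hM, Matrix.mul_assoc, ← Matrix.mul_assoc Aᵀ, hgram, conj_mul_conj hVV,
        conj_mul_conj hVV, diagonal_mul_diagonal, diagonal_mul_diagonal]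
    have hone : (1 : Matrix (Fin d₂) (Fin d₂) ℝ) = V * diagonal (fun _ => 1) * Vᵀ := by
      rw [diagonal_one, Matrix.mul_one, hVV']
    rw [hgram', hone, ← Matrix.sub_mul, ← Matrix.mul_sub, diagonal_sub]
    refine (PosSemidef.diagonal fun j => ?_).mul_mul_conjTranspose_same V
    rw [Pi.zero_apply, sub_nonneg, mul_left_comm, ← mul_inv, Real.mul_self_sqrt (he j),
      ← div_eq_mul_inv]
    exact div_self_le_one _
  · rw [tinner, transpose_mul, hM, Matrix.mul_assoc, hgram, conj_mul_conj hVV,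
      diagonal_mul_diagonal, trace_mul_comm, ← Matrix.mul_assoc, hVV, Matrix.one_mul,
      trace_diagonal, hnn]
    exact sum_congr rfl fun j _ => hge j

lemma nuclearNorm_nonneg (A : Matrix (Fin d₁) (Fin d₂) ℝ) : 0 ≤ nuclearNorm A :=
  sum_nonneg fun _ _ => Real.sqrt_nonneg _

lemma nuclearNorm_add_le (A B : Matrix (Fin d₁) (Fin d₂) ℝ) :
    nuclearNorm (A + B) ≤ nuclearNorm A + nuclearNorm B := by
  obtain ⟨C, hC, hCAB⟩ := exists_tinner_eq_nuclearNorm (A + B)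
  rw [← hCAB, tinner_add_right]
  exact add_le_add (tinner_le_nuclearNorm hC A) (tinner_le_nuclearNorm hC B)

lemma nuclearNorm_smul {c : ℝ} (hc : 0 ≤ c) (A : Matrix (Fin d₁) (Fin d₂) ℝ) :
    nuclearNorm (c • A) = c * nuclearNorm A := by
  obtain ⟨B, hB, hBcA⟩ := exists_tinner_eq_nuclearNorm (c • A)
  obtain ⟨C, hC, hCA⟩ := exists_tinner_eq_nuclearNorm A
  refine le_antisymm ?_ ?_
  · rw [← hBcA, tinner_smul_right]
    exact mul_le_mul_of_nonneg_left (tinner_le_nuclearNorm hB A) hc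
  · rw [← hCA, ← tinner_smul_right]
    exact tinner_le_nuclearNorm hC _

lemma nuclearNorm_sub_comm (A B : Matrix (Fin d₁) (Fin d₂) ℝ) :
    nuclearNorm (A - B) = nuclearNorm (B - A) := by
  rw [← neg_sub, nuclearNorm_neg]

lemma nuclearNorm_sub_le_sub_add_sub (A B C : Matrix (Fin d₁) (Fin d₂) ℝ) :
    nuclearNorm (A - C) ≤ nuclearNorm (A - B) + nuclearNorm (B - C) := by
  simpa using nuclearNorm_add_le (A - B) (B - C)

lemma nuclearNorm_convex_comb_le {a : ℝ} (ha₀ : 0 ≤ a) (ha₁ : a ≤ 1)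
    (A B : Matrix (Fin d₁) (Fin d₂) ℝ) :
    nuclearNorm (a • A + (1 - a) • B) ≤ a * nuclearNorm A + (1 - a) * nuclearNorm B := by
  calc _ ≤ nuclearNorm (a • A) + nuclearNorm ((1 - a) • B) := nuclearNorm_add_le _ _
    _ = _ := by rw [nuclearNorm_smul ha₀, nuclearNorm_smul (sub_nonneg.mpr ha₁)]

end MatrixNorms

section ProximalGradient

variable {d₁ d₂ : ℕ} {L Q : Matrix (Fin d₁) (Fin d₂) ℝ → ℝ}
  {gradL gradQ : Matrix (Fin d₁) (Fin d₂) ℝ → Matrix (Fin d₁) (Fin d₂) ℝ} {lam : ℝ}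

noncomputable def objective (L Q : Matrix (Fin d₁) (Fin d₂) ℝ → ℝ) (lam : ℝ)
    (Θ : Matrix (Fin d₁) (Fin d₂) ℝ) : ℝ :=
  L Θ + Q Θ + lam * nuclearNorm Θ

lemma objective_sub_ge_of_stationary {α₂ τ₂ μ : ℝ} {Θhat G Θ : Matrix (Fin d₁) (Fin d₂) ℝ}
    (hlam : 0 ≤ lam)
    (hRSC : α₂ * frobNorm (Θ - Θhat) ^ 2 - τ₂ * nuclearNorm (Θ - Θhat) ^ 2 ≤
      L Θ - L Θhat - tinner (gradL Θhat) (Θ - Θhat))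
    (hQlow : Q Θhat + tinner (gradQ Θhat) (Θ - Θhat) - μ / 2 * frobNorm (Θ - Θhat) ^ 2 ≤ Q Θ)
    (hG : nuclearNorm Θ ≥ nuclearNorm Θhat + tinner G (Θ - Θhat))
    (hstat : tinner (gradL Θhat + gradQ Θhat + lam • G) (Θ - Θhat) ≥ 0) :
    (2 * α₂ - μ) / 2 * frobNorm (Θ - Θhat) ^ 2 - τ₂ * nuclearNorm (Θ - Θhat) ^ 2 ≤
      objective L Q lam Θ - objective L Q lam Θhat := by
  rw [tinner_add_left, tinner_add_left, tinner_smul_left] at hstat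
  have := mul_le_mul_of_nonneg_left hG hlam
  unfold objective
  linarith

lemma objective_le_of_prox_step {α₃ τ₃ v : ℝ} {Θ₀ Θ₁ Θ : Matrix (Fin d₁) (Fin d₂) ℝ}
    (hRSM : L Θ₁ - L Θ₀ - tinner (gradL Θ₀) (Θ₁ - Θ₀) ≤
      α₃ * frobNorm (Θ₁ - Θ₀) ^ 2 + τ₃ * nuclearNorm (Θ₁ - Θ₀) ^ 2)
    (hQup : Q Θ₁ ≤ Q Θ₀ + tinner (gradQ Θ₀) (Θ₁ - Θ₀)) (hv : 2 * α₃ ≤ v)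
    (hprox : tinner (gradL Θ₀ + gradQ Θ₀) (Θ₁ - Θ₀) + v / 2 * frobNorm (Θ₁ - Θ₀) ^ 2 +
        lam * nuclearNorm Θ₁ ≤
      tinner (gradL Θ₀ + gradQ Θ₀) (Θ - Θ₀) + v / 2 * frobNorm (Θ - Θ₀) ^ 2 + lam * nuclearNorm Θ) :
    objective L Q lam Θ₁ ≤ L Θ₀ + Q Θ₀ + tinner (gradL Θ₀ + gradQ Θ₀) (Θ - Θ₀) +
      v / 2 * frobNorm (Θ - Θ₀) ^ 2 + lam * nuclearNorm Θ + τ₃ * nuclearNorm (Θ₁ - Θ₀) ^ 2 := by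
  have : α₃ * frobNorm (Θ₁ - Θ₀) ^ 2 ≤ v / 2 * frobNorm (Θ₁ - Θ₀) ^ 2 := by
    gcongr; linarith
  rw [tinner_add_left] at hprox
  unfold objective
  linarith

/- One proximal step does at least as well as the feasible point `Θ₀ + a • (Θhat - Θ₀)`. -/
lemma objective_succ_sub_le {α₂ α₃ τ₂ τ₃ μ v ω a : ℝ} {Θhat Θ₀ Θ₁ : Matrix (Fin d₁) (Fin d₂) ℝ}
    (hlam : 0 ≤ lam) (ha₀ : 0 ≤ a) (ha₁ : a ≤ 1) (hva : v * a ≤ 2 * α₂ - μ)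
    (hhat : nuclearNorm Θhat ≤ ω) (h₀ : nuclearNorm Θ₀ ≤ ω)
    (hRSC : α₂ * frobNorm (Θhat - Θ₀) ^ 2 - τ₂ * nuclearNorm (Θhat - Θ₀) ^ 2 ≤
      L Θhat - L Θ₀ - tinner (gradL Θ₀) (Θhat - Θ₀))
    (hQlow : Q Θ₀ + tinner (gradQ Θ₀) (Θhat - Θ₀) - μ / 2 * frobNorm (Θhat - Θ₀) ^ 2 ≤ Q Θhat)
    (hRSM : L Θ₁ - L Θ₀ - tinner (gradL Θ₀) (Θ₁ - Θ₀) ≤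
      α₃ * frobNorm (Θ₁ - Θ₀) ^ 2 + τ₃ * nuclearNorm (Θ₁ - Θ₀) ^ 2)
    (hQup : Q Θ₁ ≤ Q Θ₀ + tinner (gradQ Θ₀) (Θ₁ - Θ₀)) (hv : 2 * α₃ ≤ v)
    (hprox : ∀ Θ : Matrix (Fin d₁) (Fin d₂) ℝ, nuclearNorm Θ ≤ ω →
      tinner (gradL Θ₀ + gradQ Θ₀) (Θ₁ - Θ₀) + v / 2 * frobNorm (Θ₁ - Θ₀) ^ 2 +
          lam * nuclearNorm Θ₁ ≤
        tinner (gradL Θ₀ + gradQ Θ₀) (Θ - Θ₀) + v / 2 * frobNorm (Θ - Θ₀) ^ 2 +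
          lam * nuclearNorm Θ) :
    objective L Q lam Θ₁ - objective L Q lam Θhat ≤
      (1 - a) * (objective L Q lam Θ₀ - objective L Q lam Θhat) +
        a * τ₂ * nuclearNorm (Θ₀ - Θhat) ^ 2 + τ₃ * nuclearNorm (Θ₁ - Θ₀) ^ 2 := by
  set Θa := a • Θhat + (1 - a) • Θ₀
  have hnorm : nuclearNorm Θa ≤ a * nuclearNorm Θhat + (1 - a) * nuclearNorm Θ₀ :=
    nuclearNorm_convex_comb_le ha₀ ha₁ _ _
  have hfeas : nuclearNorm Θa ≤ ω := hnorm.trans (by nlinarith)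
  have hdir : Θa - Θ₀ = a • (Θhat - Θ₀) := by
    simp only [Θa, smul_sub, sub_smul, one_smul]; abel
  have hdesc := objective_le_of_prox_step hRSM hQup hv (hprox Θa hfeas)
  rw [hdir, tinner_smul_right, tinner_add_left, frobNorm_eq_norm, norm_smul,
    Real.norm_of_nonneg ha₀, ← frobNorm_eq_norm] at hdesc
  rw [nuclearNorm_sub_comm] at hRSC
  have hF : a * frobNorm (Θhat - Θ₀) ^ 2 / 2 * (v * a) ≤
      a * frobNorm (Θhat - Θ₀) ^ 2 / 2 * (2 * α₂ - μ) := by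
    gcongr
  have hL := mul_le_mul_of_nonneg_left hRSC ha₀
  have hQ := mul_le_mul_of_nonneg_left hQlow ha₀
  have hN := mul_le_mul_of_nonneg_left hnorm hlam
  unfold objective at *
  linarith

end ProximalGradient

lemma sq_le_of_le_mul_add_add {n c f a b : ℝ} (hn : 0 ≤ n) (h : n ≤ c * f + a + b) :
    n ^ 2 ≤ 2 * c ^ 2 * f ^ 2 + 4 * (a ^ 2 + b ^ 2) := by
  have := pow_le_pow_left₀ hn h 2
  linarith [sq_nonneg (c * f - a - b), sq_nonneg (a - b)]

lemma cone_constant_sq {lam qq Rq : ℝ} (hlam : 0 ≤ lam) (hRq : 0 ≤ Rq) :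
    (4 * √2 * lam ^ (-(qq / 2)) * Rq ^ ((1 : ℝ) / 2)) ^ 2 = 32 * lam ^ (-qq) * Rq := by
  rw [mul_pow, mul_pow, mul_pow, ← Real.rpow_mul_natCast hlam, ← Real.sqrt_eq_rpow,
    Real.sq_sqrt hRq, Real.sq_sqrt zero_le_two]
  push_cast
  ring_nf

lemma sq_nuclearNorm_le_of_cone {d₁ d₂ : ℕ} {lam qq Rq τ ε₁ ε₂ : ℝ}
    {Δ : Matrix (Fin d₁) (Fin d₂) ℝ} (hlam : 0 ≤ lam) (hRq : 0 ≤ Rq) (hτ : 0 ≤ τ)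
    (hcone : nuclearNorm Δ ≤
      4 * √2 * lam ^ (-(qq / 2)) * Rq ^ ((1 : ℝ) / 2) * frobNorm Δ + ε₁ + ε₂) :
    τ * nuclearNorm Δ ^ 2 ≤
      64 * (τ * lam ^ (-qq) * Rq) * frobNorm Δ ^ 2 + 4 * τ * (ε₁ ^ 2 + ε₂ ^ 2) := by
  have h := mul_le_mul_of_nonneg_left (sq_le_of_le_mul_add_add (nuclearNorm_nonneg Δ) hcone) hτ
  rw [cone_constant_sq hlam hRq] at h
  linarith

lemma le_pow_mul_add_of_le_mul_add {a : ℕ → ℝ} {κ b : ℝ} {T : ℕ} (hκ₀ : 0 ≤ κ) (hκ₁ : κ < 1)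
    (hb : 0 ≤ b) (h : ∀ t, T ≤ t → a (t + 1) ≤ κ * a t + b) :
    ∀ t, T ≤ t → a t ≤ κ ^ (t - T) * a T + b / (1 - κ) := by
  have hκ : 0 < 1 - κ := sub_pos.mpr hκ₁
  intro t ht
  induction t, ht using Nat.le_induction with
  | base => simpa using div_nonneg hb hκ.le
  | succ t ht ih =>
    calc a (t + 1) ≤ κ * (κ ^ (t - T) * a T + b / (1 - κ)) + b :=
          (h t ht).trans (by gcongr)
      _ = κ ^ (t + 1 - T) * a T + b / (1 - κ) := by
          rw [Nat.sub_add_comm ht, pow_succ]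
          field_simp
          ring

lemma excess_contraction {γ ζ τ τ₂ τ₃ a ε E₀ E₁ F₀ F₁ N₀ N₁ M : ℝ}
    (hζ : 0 ≤ ζ) (hγζ : 512 * ζ < γ) (ha₀ : 0 ≤ a) (ha₁ : a ≤ 1) (hε : 0 ≤ ε)
    (hτ₂ : 0 ≤ τ₂) (hτ₂τ : τ₂ ≤ τ) (hτ₃τ : τ₃ ≤ τ) (hF₀ : 0 ≤ F₀) (hF₁ : 0 ≤ F₁) (hM₀ : 0 ≤ M)
    (hM : M ≤ N₀ + N₁)
    (hcone₀ : τ * N₀ ^ 2 ≤ 64 * ζ * F₀ + 4 * τ * ε)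
    (hcone₁ : τ * N₁ ^ 2 ≤ 64 * ζ * F₁ + 4 * τ * ε)
    (hlow₀ : γ / 2 * F₀ - τ₂ * N₀ ^ 2 ≤ E₀) (hlow₁ : γ / 2 * F₁ - τ₂ * N₁ ^ 2 ≤ E₁)
    (hstep : E₁ ≤ (1 - a) * E₀ + a * τ₂ * N₀ ^ 2 + τ₃ * M ^ 2) :
    E₁ ≤ (1 - a + 512 * ζ / γ) / (1 - 512 * ζ / γ) * E₀ +
      2 * (2 * τ * (a + 1024 * ζ / γ + 5) / (1 - 512 * ζ / γ)) * ε := by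
  have hγ : 0 < γ := by linarith
  have hτ : 0 ≤ τ := hτ₂.trans hτ₂τ
  have hfrob : ∀ {F N E : ℝ}, 0 ≤ F → τ * N ^ 2 ≤ 64 * ζ * F + 4 * τ * ε →
      γ / 2 * F - τ₂ * N ^ 2 ≤ E → 3 * γ / 8 * F ≤ E + 4 * τ * ε := by
    intro F N E hF hc hl
    have : τ₂ * N ^ 2 ≤ τ * N ^ 2 := by gcongr
    have : 64 * ζ * F ≤ γ / 8 * F := by gcongr; linarith
    linarith
  have hfrob₀ := hfrob hF₀ hcone₀ hlow₀
  have hfrob₁ := hfrob hF₁ hcone₁ hlow₁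
  have hM2 : M ^ 2 ≤ 2 * N₀ ^ 2 + 2 * N₁ ^ 2 := by
    have := pow_le_pow_left₀ hM₀ hM 2
    linarith [sq_nonneg (N₀ - N₁)]
  have hrec : E₁ ≤ (1 - a) * E₀ + 192 * ζ * F₀ + 128 * ζ * F₁ + 20 * τ * ε := by
    have : a * τ₂ * N₀ ^ 2 ≤ τ * N₀ ^ 2 := by
      gcongr; exact (mul_le_of_le_one_left hτ₂ ha₁).trans hτ₂τ
    have : τ₃ * M ^ 2 ≤ τ * (2 * N₀ ^ 2 + 2 * N₁ ^ 2) := mul_le_mul hτ₃τ hM2 (sq_nonneg M) hτ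
    linarith
  have hkey : (γ - 512 * ζ) * E₁ ≤
      (γ * (1 - a) + 512 * ζ) * E₀ + (4 * a * γ + 4096 * ζ + 20 * γ) * τ * ε := by
    have := mul_le_mul_of_nonneg_left hrec hγ.le
    have := mul_le_mul_of_nonneg_left hfrob₀ hζ
    have := mul_le_mul_of_nonneg_left hfrob₁ hζ
    have : 0 ≤ ζ * (E₁ + 4 * τ * ε) := mul_nonneg hζ (le_trans (by positivity) hfrob₁)
    have : 0 ≤ a * γ * τ * ε := by positivity
    linarith
  have hden : 0 < γ - 512 * ζ := by linarith
  have h1 : 1 - 512 * ζ / γ = (γ - 512 * ζ) / γ := by field_simp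
  calc E₁ ≤ ((γ * (1 - a) + 512 * ζ) * E₀ + (4 * a * γ + 4096 * ζ + 20 * γ) * τ * ε) /
        (γ - 512 * ζ) := by rw [le_div_iff₀ hden]; linarith
    _ = _ := by rw [h1]; field_simp; ring

theorem excess_objective_geometric_decay_general {d₁ d₂ : ℕ}
    (μ α₂ α₃ τ₂ τ₃ τ lam qq Rq ω εbar δ εδ ζ v κ ξ : ℝ)
    (hα₂ : μ / 2 < α₂) (hτ₂ : 0 < τ₂) (hτ : τ = max τ₂ τ₃) (hlam : 0 < lam) (hRq : 0 < Rq)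
    (hζ : ζ = τ * lam ^ (-qq) * Rq)
    (L Q : Matrix (Fin d₁) (Fin d₂) ℝ → ℝ)
    (gradL gradQ : Matrix (Fin d₁) (Fin d₂) ℝ → Matrix (Fin d₁) (Fin d₂) ℝ)
    (hRSC : ∀ Θ Θ' : Matrix (Fin d₁) (Fin d₂) ℝ,
      α₂ * frobNorm (Θ - Θ') ^ 2 - τ₂ * nuclearNorm (Θ - Θ') ^ 2 ≤
        L Θ - L Θ' - tinner (gradL Θ') (Θ - Θ'))
    (hRSM : ∀ Θ Θ' : Matrix (Fin d₁) (Fin d₂) ℝ,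
      L Θ - L Θ' - tinner (gradL Θ') (Θ - Θ') ≤
        α₃ * frobNorm (Θ - Θ') ^ 2 + τ₃ * nuclearNorm (Θ - Θ') ^ 2)
    (hQlow : ∀ Θ Θ' : Matrix (Fin d₁) (Fin d₂) ℝ,
      Q Θ' + tinner (gradQ Θ') (Θ - Θ') - μ / 2 * frobNorm (Θ - Θ') ^ 2 ≤ Q Θ)
    (hQup : ∀ Θ Θ' : Matrix (Fin d₁) (Fin d₂) ℝ,
      Q Θ ≤ Q Θ' + tinner (gradQ Θ') (Θ - Θ'))
    (Θhat : Matrix (Fin d₁) (Fin d₂) ℝ) (hhat_feas : nuclearNorm Θhat ≤ ω)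
    (hG : ∃ G : Matrix (Fin d₁) (Fin d₂) ℝ,
      (∀ Θ : Matrix (Fin d₁) (Fin d₂) ℝ,
        nuclearNorm Θ ≥ nuclearNorm Θhat + tinner G (Θ - Θhat)) ∧
      ∀ Θ : Matrix (Fin d₁) (Fin d₂) ℝ, nuclearNorm Θ ≤ ω →
        tinner (gradL Θhat + gradQ Θhat + lam • G) (Θ - Θhat) ≥ 0)
    (hv₃ : 2 * α₃ ≤ v) (hv₂ : (2 * α₂ - μ) / 4 ≤ v)
    (Θseq : ℕ → Matrix (Fin d₁) (Fin d₂) ℝ)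
    (hseq_feas : ∀ t : ℕ, nuclearNorm (Θseq t) ≤ ω)
    (hiter : ∀ t : ℕ, ∀ Θ : Matrix (Fin d₁) (Fin d₂) ℝ, nuclearNorm Θ ≤ ω →
      tinner (gradL (Θseq t) + gradQ (Θseq t)) (Θseq (t + 1) - Θseq t) +
          v / 2 * frobNorm (Θseq (t + 1) - Θseq t) ^ 2 +
          lam * nuclearNorm (Θseq (t + 1)) ≤
        tinner (gradL (Θseq t) + gradQ (Θseq t)) (Θ - Θseq t) +
          v / 2 * frobNorm (Θ - Θseq t) ^ 2 + lam * nuclearNorm Θ)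
    (hζsmall : 512 * ζ < 2 * α₂ - μ)
    (hκ : κ = (1 - (2 * α₂ - μ) / (8 * v) + 512 * ζ / (2 * α₂ - μ)) /
              (1 - 512 * ζ / (2 * α₂ - μ)))
    (hκ0 : 0 < κ) (hκ1 : κ < 1)
    (hξ : ξ = 2 * τ * ((2 * α₂ - μ) / (8 * v) + 1024 * ζ / (2 * α₂ - μ) + 5) /
              (1 - 512 * ζ / (2 * α₂ - μ)))
    (T : ℕ)
    (hT : ∀ t : ℕ, T ≤ t →
      (L (Θseq t) + Q (Θseq t) + lam * nuclearNorm (Θseq t)) -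
          (L Θhat + Q Θhat + lam * nuclearNorm Θhat) ≤ δ ∧
      nuclearNorm (Θseq t - Θhat) ≤
        4 * Real.sqrt 2 * lam ^ (-(qq / 2)) * Rq ^ ((1 : ℝ) / 2) *
          frobNorm (Θseq t - Θhat) + εbar + εδ) :
    ∀ t : ℕ, T ≤ t →
      (L (Θseq t) + Q (Θseq t) + lam * nuclearNorm (Θseq t)) -
          (L Θhat + Q Θhat + lam * nuclearNorm Θhat) ≤
        κ ^ (t - T) * ((L (Θseq T) + Q (Θseq T) + lam * nuclearNorm (Θseq T)) -
            (L Θhat + Q Θhat + lam * nuclearNorm Θhat)) +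
          2 * ξ / (1 - κ) * (εbar ^ 2 + εδ ^ 2) := by
  obtain ⟨G, hGsub, hGstat⟩ := hG
  set γ := 2 * α₂ - μ
  set a := γ / (8 * v)
  have hγ : 0 < γ := by linarith
  have hv : 0 < v := lt_of_lt_of_le (by positivity) hv₂
  have ha₀ : 0 ≤ a := by positivity
  have ha₁ : a ≤ 1 := by rw [div_le_one (by positivity)]; linarith
  have hva : v * a ≤ γ := by
    rw [show v * a = γ / 8 by simp only [a]; field_simp]; linarith
  have hτ₂τ : τ₂ ≤ τ := hτ ▸ le_max_left _ _
  have hτ₃τ : τ₃ ≤ τ := hτ ▸ le_max_right _ _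
  have hτ₀ : 0 ≤ τ := hτ₂.le.trans hτ₂τ
  have hζ₀ : 0 ≤ ζ := by rw [hζ]; positivity
  have hcone : ∀ t, T ≤ t → τ * nuclearNorm (Θseq t - Θhat) ^ 2 ≤
      64 * ζ * frobNorm (Θseq t - Θhat) ^ 2 + 4 * τ * (εbar ^ 2 + εδ ^ 2) := fun t ht =>
    hζ ▸ sq_nuclearNorm_le_of_cone hlam.le hRq.le hτ₀ (hT t ht).2
  have hlow : ∀ t, γ / 2 * frobNorm (Θseq t - Θhat) ^ 2 - τ₂ * nuclearNorm (Θseq t - Θhat) ^ 2 ≤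
      objective L Q lam (Θseq t) - objective L Q lam Θhat := fun t =>
    objective_sub_ge_of_stationary hlam.le (hRSC _ _) (hQlow _ _) (hGsub _)
      (hGstat _ (hseq_feas t))
  have hξ₀ : 0 ≤ ξ :=
    hξ ▸ div_nonneg (by positivity) (sub_nonneg.mpr ((div_le_one hγ).mpr hζsmall.le))
  rw [div_mul_eq_mul_div]
  refine le_pow_mul_add_of_le_mul_add (a := fun t => objective L Q lam (Θseq t) -
    objective L Q lam Θhat) hκ0.le hκ1 (by positivity) fun t ht => ?_
  subst hκ hξ
  exact excess_contraction hζ₀ hζsmall ha₀ ha₁ (by positivity) hτ₂.le hτ₂τ hτ₃τ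
    (sq_nonneg _) (sq_nonneg _) (nuclearNorm_nonneg _)
    ((nuclearNorm_sub_le_sub_add_sub _ Θhat _).trans_eq
      (by rw [add_comm, nuclearNorm_sub_comm Θhat]))
    (hcone t ht) (hcone (t + 1) (by omega)) (hlow t) (hlow (t + 1))
    (objective_succ_sub_le hlam.le ha₀ ha₁ hva hhat_feas (hseq_feas t) (hRSC _ _) (hQlow _ _)
      (hRSM _ _) (hQup _ _) hv₃ (hiter t))

/-- Inequality (lem-bound-0) of Lemma 6: geometric decay of the excess objective of
the proximal gradient iterates, up to the statistical tolerance. -/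
theorem excess_objective_geometric_decay {d₁ d₂ : ℕ}
    (μ α₂ α₃ τ₂ τ₃ τ lam qq Rq ω εbar δ εδ ζ v κ ξ : ℝ)
    (hμ : 0 ≤ μ) (hα₂ : μ / 2 < α₂) (hα₃ : 0 < α₃) (hτ₂ : 0 < τ₂) (hτ₃ : 0 < τ₃)
    (hτ : τ = max τ₂ τ₃) (hlam : 0 < lam) (hqq0 : 0 < qq) (hqq1 : qq ≤ 1)
    (hRq : 0 < Rq) (hω : 0 < ω) (hεbar : 0 ≤ εbar) (hδ : 0 ≤ δ)
    (hεδ : εδ = 2 * min (δ / lam) ω) (hζ : ζ = τ * lam ^ (-qq) * Rq)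
    (L Q : Matrix (Fin d₁) (Fin d₂) ℝ → ℝ)
    (gradL gradQ : Matrix (Fin d₁) (Fin d₂) ℝ → Matrix (Fin d₁) (Fin d₂) ℝ)
    (hdL : Differentiable ℝ L)
    (hgL : ∀ Θ Δ : Matrix (Fin d₁) (Fin d₂) ℝ, fderiv ℝ L Θ Δ = tinner (gradL Θ) Δ)
    (hdQ : Differentiable ℝ Q)
    (hgQ : ∀ Θ Δ : Matrix (Fin d₁) (Fin d₂) ℝ, fderiv ℝ Q Θ Δ = tinner (gradQ Θ) Δ)
    (hRSC : ∀ Θ Θ' : Matrix (Fin d₁) (Fin d₂) ℝ,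
      α₂ * frobNorm (Θ - Θ') ^ 2 - τ₂ * nuclearNorm (Θ - Θ') ^ 2 ≤
        L Θ - L Θ' - tinner (gradL Θ') (Θ - Θ'))
    (hRSM : ∀ Θ Θ' : Matrix (Fin d₁) (Fin d₂) ℝ,
      L Θ - L Θ' - tinner (gradL Θ') (Θ - Θ') ≤
        α₃ * frobNorm (Θ - Θ') ^ 2 + τ₃ * nuclearNorm (Θ - Θ') ^ 2)
    (hQlow : ∀ Θ Θ' : Matrix (Fin d₁) (Fin d₂) ℝ,
      Q Θ' + tinner (gradQ Θ') (Θ - Θ') - μ / 2 * frobNorm (Θ - Θ') ^ 2 ≤ Q Θ)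
    (hQup : ∀ Θ Θ' : Matrix (Fin d₁) (Fin d₂) ℝ,
      Q Θ ≤ Q Θ' + tinner (gradQ Θ') (Θ - Θ'))
    (Θhat : Matrix (Fin d₁) (Fin d₂) ℝ) (hhat_feas : nuclearNorm Θhat ≤ ω)
    (hhat_min : ∀ Θ : Matrix (Fin d₁) (Fin d₂) ℝ, nuclearNorm Θ ≤ ω →
      L Θhat + Q Θhat + lam * nuclearNorm Θhat ≤ L Θ + Q Θ + lam * nuclearNorm Θ)
    (hG : ∃ G : Matrix (Fin d₁) (Fin d₂) ℝ,
      (∀ Θ : Matrix (Fin d₁) (Fin d₂) ℝ,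
        nuclearNorm Θ ≥ nuclearNorm Θhat + tinner G (Θ - Θhat)) ∧
      ∀ Θ : Matrix (Fin d₁) (Fin d₂) ℝ, nuclearNorm Θ ≤ ω →
        tinner (gradL Θhat + gradQ Θhat + lam • G) (Θ - Θhat) ≥ 0)
    (hv₃ : 2 * α₃ ≤ v) (hv₂ : (2 * α₂ - μ) / 4 ≤ v)
    (Θseq : ℕ → Matrix (Fin d₁) (Fin d₂) ℝ)
    (hseq_feas : ∀ t : ℕ, nuclearNorm (Θseq t) ≤ ω)
    (hiter : ∀ t : ℕ, ∀ Θ : Matrix (Fin d₁) (Fin d₂) ℝ, nuclearNorm Θ ≤ ω →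
      tinner (gradL (Θseq t) + gradQ (Θseq t)) (Θseq (t + 1) - Θseq t) +
          v / 2 * frobNorm (Θseq (t + 1) - Θseq t) ^ 2 +
          lam * nuclearNorm (Θseq (t + 1)) ≤
        tinner (gradL (Θseq t) + gradQ (Θseq t)) (Θ - Θseq t) +
          v / 2 * frobNorm (Θ - Θseq t) ^ 2 + lam * nuclearNorm Θ)
    (hlamq : lam ^ qq ≥ 256 * τ * Rq / (2 * α₂ - μ))
    (hζsmall : 512 * ζ < 2 * α₂ - μ)
    (hκ : κ = (1 - (2 * α₂ - μ) / (8 * v) + 512 * ζ / (2 * α₂ - μ)) /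
              (1 - 512 * ζ / (2 * α₂ - μ)))
    (hκ0 : 0 < κ) (hκ1 : κ < 1)
    (hξ : ξ = 2 * τ * ((2 * α₂ - μ) / (8 * v) + 1024 * ζ / (2 * α₂ - μ) + 5) /
              (1 - 512 * ζ / (2 * α₂ - μ)))
    (T : ℕ)
    (hT : ∀ t : ℕ, T ≤ t →
      (L (Θseq t) + Q (Θseq t) + lam * nuclearNorm (Θseq t)) -
          (L Θhat + Q Θhat + lam * nuclearNorm Θhat) ≤ δ ∧
      nuclearNorm (Θseq t - Θhat) ≤
        4 * Real.sqrt 2 * lam ^ (-(qq / 2)) * Rq ^ ((1 : ℝ) / 2) *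
          frobNorm (Θseq t - Θhat) + εbar + εδ) :
    ∀ t : ℕ, T ≤ t →
      (L (Θseq t) + Q (Θseq t) + lam * nuclearNorm (Θseq t)) -
          (L Θhat + Q Θhat + lam * nuclearNorm Θhat) ≤
        κ ^ (t - T) * ((L (Θseq T) + Q (Θseq T) + lam * nuclearNorm (Θseq T)) -
            (L Θhat + Q Θhat + lam * nuclearNorm Θhat)) +
          2 * ξ / (1 - κ) * (εbar ^ 2 + εδ ^ 2) :=
  excess_objective_geometric_decay_general μ α₂ α₃ τ₂ τ₃ τ lam qq Rq ω εbar δ εδ ζ v κ ξ hα₂ hτ₂ hτ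
    hlam hRq hζ L Q gradL gradQ hRSC hRSM hQlow hQup Θhat hhat_feas hG hv₃ hv₂ Θseq hseq_feas hiter
    hζsmall hκ hκ0 hκ1 hξ T hT
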